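/- arXiv:1002.3700 — 2 statements merged into one kernel-verified Lean document; each statement's English description precedes it below -/
import Mathlib

section
/- Let f = P/Q be a rational function on ℂ^d with Q a monomial, P a polynomial, and gcd(P,Q)=1 in the sense that no variable dividing Q divides P. Define X ⊂ ℙ^d × ℙ¹ as X = {([x₀:x], [α:β]) : α · P̃(x₀,x) · x₀^{deg Q} = β · x₀^{deg P} · Q(x)}, where P̃ is the homogenization of P. Then the map i : (ℂ*)^d \ f^{-1}(0) → X, x ↦ ([1:x],[f(x):1]) is a well-defined open immersion, the projection f̂ : X → ℙ¹, ([x],[α:β]) ↦ [α:β] is proper, and f̂ ∘ i = j ∘ f where j : ℂ → ℙ¹, a ↦ [1:a]. In particular (X, i, f̂) is a compactification of f. -/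
open Finset MvPolynomial

noncomputable section

/-- Quotient topology on projective space. -/
instance {K V : Type*} [DivisionRing K] [AddCommGroup V] [Module K V]
    [TopologicalSpace V] : TopologicalSpace (Projectivization K V) :=
  instTopologicalSpaceQuotient

/-- Complex projective `n`-space. -/
abbrev ProjSp (n : ℕ) := Projectivization ℂ (Fin (n + 1) → ℂ)

/-- The degree-`deg P` homogenization `P̃` of `P` with respect to `x₀`, evaluated. -/
def homogEval {d : ℕ} (P : MvPolynomial (Fin d) ℂ) (x0 : ℂ) (x : Fin d → ℂ) : ℂ :=
  ∑ α ∈ P.support, P.coeff α * x0 ^ (P.totalDegree - α.sum fun _ n => n) * ∏ i, x i ^ α i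

/-- The rational function `f = P / Q`, where `Q` is the monomial `∏ x_i ^ q i`. -/
def fval {d : ℕ} (P : MvPolynomial (Fin d) ℂ) (q : Fin d → ℕ) (x : Fin d → ℂ) : ℂ :=
  eval x P / ∏ i, x i ^ q i

/-- The compactification `X ⊆ ℙ^d × ℙ¹`, cut out by the bihomogeneous equation
`α · P̃(x₀,x) · x₀^{deg Q} = β · x₀^{deg P} · Q(x)` (here `w 0 = α`, `w 1 = β`). -/
def Xset {d : ℕ} (P : MvPolynomial (Fin d) ℂ) (q : Fin d → ℕ) : Set (ProjSp d × ProjSp 1) :=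
  {p | ∃ v : Fin (d + 1) → ℂ, ∃ hv : v ≠ 0, ∃ w : Fin 2 → ℂ, ∃ hw : w ≠ 0,
    p = (Projectivization.mk ℂ v hv, Projectivization.mk ℂ w hw) ∧
    w 0 * homogEval P (v 0) (fun i => v i.succ) * (v 0) ^ (∑ i, q i) =
      w 1 * (v 0) ^ P.totalDegree * ∏ i, (v i.succ) ^ q i}

/-- The point `[1 : a] ∈ ℙ¹` (standard open immersion `j : 𝔸¹ → ℙ¹`). -/
def jmap (a : ℂ) : ProjSp 1 :=
  Projectivization.mk ℂ ![1, a] (by intro h; have := congrFun h 0; simp at this)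

/-- The map `i : x ↦ ([1 : x], [1 : f(x)])`. -/
def imap {d : ℕ} (P : MvPolynomial (Fin d) ℂ) (q : Fin d → ℕ) (x : Fin d → ℂ) :
    ProjSp d × ProjSp 1 :=
  (Projectivization.mk ℂ (Fin.cons 1 x) (by intro h; have := congrFun h 0; simp at this),
   jmap (fval P q x))


section Aux
open Complex

variable {d : ℕ}

lemma homogEval_one (P : MvPolynomial (Fin d) ℂ) (x : Fin d → ℂ) :
    homogEval P 1 x = eval x P := by
  rw [homogEval, eval_eq']
  simp

lemma finsupp_sum_eq (α : Fin d →₀ ℕ) : (α.sum fun _ n => n) = ∑ i, α i :=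
  Finsupp.sum_fintype _ _ (fun _ => rfl)

lemma homogEval_smul (P : MvPolynomial (Fin d) ℂ) (c x0 : ℂ) (x : Fin d → ℂ) :
    homogEval P (c * x0) (fun i => c * x i) = c ^ P.totalDegree * homogEval P x0 x := by
  rw [homogEval, homogEval, mul_sum]
  refine Finset.sum_congr rfl fun α hα => ?_
  have hle : (α.sum fun _ n => n) ≤ P.totalDegree := le_totalDegree hα
  have h1 : ∏ i, (c * x i) ^ α i = c ^ (α.sum fun _ n => n) * ∏ i, x i ^ α i := by
    rw [finsupp_sum_eq, ← Finset.prod_pow_eq_pow_sum, ← Finset.prod_mul_distrib]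
    exact Finset.prod_congr rfl fun i _ => mul_pow _ _ _
  rw [h1, mul_pow,
    show c ^ P.totalDegree = c ^ (P.totalDegree - α.sum fun _ n => n) * c ^ (α.sum fun _ n => n) by
      rw [← pow_add, Nat.sub_add_cancel hle]]
  ring

/-- The defining equation of `Xset`. -/
def Efun (P : MvPolynomial (Fin d) ℂ) (q : Fin d → ℕ) (v : Fin (d + 1) → ℂ)
    (w : Fin 2 → ℂ) : Prop :=
  w 0 * homogEval P (v 0) (fun i => v i.succ) * (v 0) ^ (∑ i, q i) =
      w 1 * (v 0) ^ P.totalDegree * ∏ i, (v i.succ) ^ q i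

lemma Efun_smul {P : MvPolynomial (Fin d) ℂ} {q : Fin d → ℕ}
    {v : Fin (d + 1) → ℂ} {w : Fin 2 → ℂ} (c b : ℂ)
    (h : Efun P q v w) : Efun P q (c • v) (b • w) := by
  have h0 : ∀ i, (c • v) i = c * v i := fun i => rfl
  have hw : ∀ i, (b • w) i = b * w i := fun i => rfl
  unfold Efun at h ⊢
  simp only [h0, hw]
  rw [homogEval_smul P c (v 0) (fun i => v i.succ)]
  rw [mul_pow, mul_pow]
  rw [show ∏ i, (c * v i.succ) ^ q i = c ^ (∑ i, q i) * ∏ i, (v i.succ) ^ q i by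
    rw [← Finset.prod_pow_eq_pow_sum, ← Finset.prod_mul_distrib]
    exact Finset.prod_congr rfl fun i _ => mul_pow _ _ _]
  calc b * w 0 * (c ^ P.totalDegree * homogEval P (v 0) fun i => v i.succ) *
        (c ^ (∑ i, q i) * (v 0) ^ (∑ i, q i))
      = (b * (c ^ P.totalDegree * c ^ (∑ i, q i))) *
          (w 0 * homogEval P (v 0) (fun i => v i.succ) * (v 0) ^ (∑ i, q i)) := by ring
    _ = (b * (c ^ P.totalDegree * c ^ (∑ i, q i))) *
          (w 1 * (v 0) ^ P.totalDegree * ∏ i, (v i.succ) ^ q i) := by rw [h]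
    _ = _ := by ring

lemma mem_Xset_iff {P : MvPolynomial (Fin d) ℂ} {q : Fin d → ℕ}
    {v : Fin (d + 1) → ℂ} {hv : v ≠ 0} {w : Fin 2 → ℂ} {hw : w ≠ 0} :
    (Projectivization.mk ℂ v hv, Projectivization.mk ℂ w hw) ∈ Xset P q ↔ Efun P q v w := by
  constructor
  · rintro ⟨v', hv', w', hw', hp, he⟩
    rw [Prod.mk.injEq] at hp
    obtain ⟨hp1, hp2⟩ := hp
    rw [Projectivization.mk_eq_mk_iff] at hp1 hp2
    obtain ⟨a, ha⟩ := hp1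
    obtain ⟨b, hb⟩ := hp2
    have := Efun_smul (a : ℂ) (b : ℂ) he
    rwa [show (a : ℂ) • v' = v from ha, show (b : ℂ) • w' = w from hb] at this
  · intro h
    exact ⟨v, hv, w, hw, rfl, h⟩

lemma cons_ne_zero' (x : Fin d → ℂ) : (Fin.cons 1 x : Fin (d + 1) → ℂ) ≠ 0 := by
  intro h; have := congrFun h 0; simp at this

lemma mk_normalize (v : Fin (d + 1) → ℂ) (hv : v ≠ 0) (h0 : v 0 ≠ 0) :
    Projectivization.mk ℂ v hv =
      Projectivization.mk ℂ (Fin.cons 1 (fun i => v i.succ / v 0)) (cons_ne_zero' _) := by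
  rw [Projectivization.mk_eq_mk_iff']
  refine ⟨v 0, ?_⟩
  funext i
  refine Fin.cases ?_ (fun j => ?_) i
  · simp
  · simp only [Pi.smul_apply, Fin.cons_succ, smul_eq_mul]
    exact mul_div_cancel₀ _ h0

lemma mk_normalize2 (w : Fin 2 → ℂ) (hw : w ≠ 0) (h0 : w 0 ≠ 0) :
    Projectivization.mk ℂ w hw = jmap (w 1 / w 0) := by
  rw [jmap, Projectivization.mk_eq_mk_iff']
  refine ⟨w 0, ?_⟩
  funext i
  fin_cases i
  · simp
  · simp only [Pi.smul_apply, smul_eq_mul, Matrix.cons_val_one, Matrix.head_cons, Fin.mk_one]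
    exact mul_div_cancel₀ _ h0

/-- The rank-one projection associated to a nonzero vector in `ℂ²`. -/
def projMat (w : Fin 2 → ℂ) : Fin 2 → Fin 2 → ℂ :=
  fun i j => w i * (starRingEnd ℂ) (w j) / ((normSq (w 0) + normSq (w 1) : ℝ) : ℂ)

lemma normSq_sum_ne_zero {w : Fin 2 → ℂ} (hw : w ≠ 0) :
    ((normSq (w 0) + normSq (w 1) : ℝ) : ℂ) ≠ 0 := by
  rw [Ne, Complex.ofReal_eq_zero]
  intro h
  have h0 : normSq (w 0) = 0 ∧ normSq (w 1) = 0 := by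
    constructor <;> nlinarith [normSq_nonneg (w 0), normSq_nonneg (w 1)]
  apply hw
  funext i
  fin_cases i
  · exact normSq_eq_zero.mp h0.1
  · exact normSq_eq_zero.mp h0.2

lemma projMat_smul (t : ℂ) (w : Fin 2 → ℂ) (ht : t ≠ 0) :
    projMat (t • w) = projMat w := by
  funext i j
  have hs : ∀ k : Fin 2, (t • w) k = t * w k := fun _ => rfl
  have hnt : ((normSq t : ℝ) : ℂ) ≠ 0 := by
    rw [Ne, Complex.ofReal_eq_zero, normSq_eq_zero]; exact ht
  have key : (t * w i) * (starRingEnd ℂ) (t * w j) =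
      ((normSq t : ℝ) : ℂ) * (w i * (starRingEnd ℂ) (w j)) := by
    rw [map_mul, ← Complex.mul_conj]; ring
  have den : ((normSq (t * w 0) + normSq (t * w 1) : ℝ) : ℂ) =
      ((normSq t : ℝ) : ℂ) * ((normSq (w 0) + normSq (w 1) : ℝ) : ℂ) := by
    push_cast [normSq_mul]; ring
  simp only [projMat, hs, key, den]
  exact mul_div_mul_left _ _ hnt

/-- `projMat` descends to `ℙ¹`. -/
def projMatDesc : ProjSp 1 → (Fin 2 → Fin 2 → ℂ) :=
  Projectivization.lift (fun w => projMat w.1) (by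
    rintro ⟨a, ha⟩ ⟨b, hb⟩ t h
    have ht : t ≠ 0 := by
      rintro rfl
      simp only [zero_smul] at h
      exact ha h
    simp only at h ⊢
    rw [h, projMat_smul t b ht])

lemma projMatDesc_mk (w : Fin 2 → ℂ) (hw : w ≠ 0) :
    projMatDesc (Projectivization.mk ℂ w hw) = projMat w := rfl

lemma continuous_projMatDesc : Continuous projMatDesc := by
  have hq : Topology.IsQuotientMap
      (Projectivization.mk' ℂ : {w : Fin 2 → ℂ // w ≠ 0} → ProjSp 1) := isQuotientMap_quotient_mk'
  rw [hq.continuous_iff]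
  have : (projMatDesc ∘ Projectivization.mk' ℂ) =
      fun w : {w : Fin 2 → ℂ // w ≠ 0} => projMat w.1 := rfl
  rw [this]
  refine continuous_pi fun i => continuous_pi fun j => Continuous.div ?_ ?_ ?_
  · exact ((continuous_apply i).comp continuous_subtype_val).mul
      (Complex.continuous_conj.comp ((continuous_apply j).comp continuous_subtype_val))
  · exact Complex.continuous_ofReal.comp
      (((continuous_normSq.comp ((continuous_apply 0).comp continuous_subtype_val))).add
        ((continuous_normSq.comp ((continuous_apply 1).comp continuous_subtype_val))))
  · exact fun w => normSq_sum_ne_zero w.2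

lemma projMatDesc_injective : Function.Injective projMatDesc := by
  intro x y h
  induction x using Projectivization.ind with | h v hv =>
  induction y using Projectivization.ind with | h u hu =>
  rw [projMatDesc_mk, projMatDesc_mk] at h
  set Nv : ℂ := ((normSq (v 0) + normSq (v 1) : ℝ) : ℂ) with hNv
  set Nu : ℂ := ((normSq (u 0) + normSq (u 1) : ℝ) : ℂ) with hNu
  have hNv0 : Nv ≠ 0 := normSq_sum_ne_zero hv
  have hNu0 : Nu ≠ 0 := normSq_sum_ne_zero hu
  have h' : ∀ i j : Fin 2,
      v i * (starRingEnd ℂ) (v j) * Nu = u i * (starRingEnd ℂ) (u j) * Nv := by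
    intro i j
    have := congrFun (congrFun h i) j
    rw [projMat, projMat, div_eq_div_iff hNv0 hNu0] at this
    exact this
  have hNveq : Nv = v 0 * (starRingEnd ℂ) (v 0) + v 1 * (starRingEnd ℂ) (v 1) := by
    rw [hNv, Complex.ofReal_add, Complex.mul_conj, Complex.mul_conj]
  set s : ℂ := (starRingEnd ℂ) (u 0) * v 0 + (starRingEnd ℂ) (u 1) * v 1 with hsdef
  have key : ∀ i : Fin 2, v i * Nu = u i * s := by
    intro i
    have h2 : v i * Nu * Nv = u i * s * Nv := by
      calc v i * Nu * Nv
          = (v i * (starRingEnd ℂ) (v 0) * Nu) * v 0 +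
              (v i * (starRingEnd ℂ) (v 1) * Nu) * v 1 := by
            rw [hNveq]; ring
        _ = (u i * (starRingEnd ℂ) (u 0) * Nv) * v 0 +
              (u i * (starRingEnd ℂ) (u 1) * Nv) * v 1 := by
            rw [h' i 0, h' i 1]
        _ = u i * s * Nv := by rw [hsdef]; ring
    exact mul_right_cancel₀ hNv0 h2
  rw [Projectivization.mk_eq_mk_iff']
  refine ⟨s / Nu, ?_⟩
  funext i
  have hkey := key i
  have hvi : v i = u i * s / Nu := by rw [← hkey]; field_simp
  rw [Pi.smul_apply, smul_eq_mul, hvi]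
  ring

lemma t2_projsp1 : T2Space (ProjSp 1) :=
  T2Space.of_injective_continuous projMatDesc_injective continuous_projMatDesc

lemma norm_one_ne_zero {E : Type*} [NormedAddCommGroup E] {v : E} (h : ‖v‖ = 1) : v ≠ 0 :=
  norm_ne_zero_iff.mp (by rw [h]; exact one_ne_zero)

lemma isCompact_ES (P : MvPolynomial (Fin d) ℂ) (q : Fin d → ℕ) :
    IsCompact {p : (Fin (d + 1) → ℂ) × (Fin 2 → ℂ) |
      Efun P q p.1 p.2 ∧ ‖p.1‖ = 1 ∧ ‖p.2‖ = 1} := by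
  have hL : Continuous fun p : (Fin (d + 1) → ℂ) × (Fin 2 → ℂ) =>
      p.2 0 * homogEval P (p.1 0) (fun i => p.1 i.succ) * (p.1 0) ^ (∑ i, q i) := by
    unfold homogEval
    refine Continuous.mul (Continuous.mul ?_ ?_) (((continuous_apply 0).comp continuous_fst).pow _)
    · exact (continuous_apply 0).comp continuous_snd
    · refine continuous_finset_sum _ fun α _ => ?_
      refine (continuous_const.mul (((continuous_apply 0).comp continuous_fst).pow _)).mul ?_
      exact continuous_finset_prod _ fun i _ =>
        ((continuous_apply i.succ).comp continuous_fst).pow _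
  have hR : Continuous fun p : (Fin (d + 1) → ℂ) × (Fin 2 → ℂ) =>
      p.2 1 * (p.1 0) ^ P.totalDegree * ∏ i, (p.1 i.succ) ^ q i := by
    refine (((continuous_apply 1).comp continuous_snd).mul
      (((continuous_apply 0).comp continuous_fst).pow _)).mul ?_
    exact continuous_finset_prod _ fun i _ => ((continuous_apply i.succ).comp continuous_fst).pow _
  have hclosed : IsClosed {p : (Fin (d + 1) → ℂ) × (Fin 2 → ℂ) |
      Efun P q p.1 p.2 ∧ ‖p.1‖ = 1 ∧ ‖p.2‖ = 1} := by
    refine IsClosed.inter (isClosed_eq hL hR) (IsClosed.inter ?_ ?_)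
    · exact isClosed_eq (continuous_fst.norm) continuous_const
    · exact isClosed_eq (continuous_snd.norm) continuous_const
  refine (isCompact_closedBall (0 : (Fin (d + 1) → ℂ) × (Fin 2 → ℂ)) 1).of_isClosed_subset
    hclosed ?_
  rintro ⟨v, w⟩ ⟨-, h1, h2⟩
  rw [Metric.mem_closedBall, dist_zero_right, Prod.norm_def]
  simp only at h1 h2
  rw [h1, h2]
  norm_num

lemma isCompact_Xset (P : MvPolynomial (Fin d) ℂ) (q : Fin d → ℕ) : IsCompact (Xset P q) := by
  set T : Set ({v : Fin (d + 1) → ℂ // v ≠ 0} × {w : Fin 2 → ℂ // w ≠ 0}) :=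
    {z | Efun P q z.1.1 z.2.1 ∧ ‖z.1.1‖ = 1 ∧ ‖z.2.1‖ = 1} with hT
  have hTcomp : IsCompact T := by
    have he : Topology.IsEmbedding
        (fun z : {v : Fin (d + 1) → ℂ // v ≠ 0} × {w : Fin 2 → ℂ // w ≠ 0} =>
          ((z.1 : Fin (d + 1) → ℂ), (z.2 : Fin 2 → ℂ))) :=
      Topology.IsEmbedding.prodMap Topology.IsEmbedding.subtypeVal Topology.IsEmbedding.subtypeVal
    rw [he.isCompact_iff]
    have himg : (fun z : {v : Fin (d + 1) → ℂ // v ≠ 0} × {w : Fin 2 → ℂ // w ≠ 0} =>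
          ((z.1 : Fin (d + 1) → ℂ), (z.2 : Fin 2 → ℂ))) '' T =
        {p : (Fin (d + 1) → ℂ) × (Fin 2 → ℂ) | Efun P q p.1 p.2 ∧ ‖p.1‖ = 1 ∧ ‖p.2‖ = 1} := by
      ext p
      constructor
      · rintro ⟨⟨⟨v, hv⟩, ⟨w, hw⟩⟩, hz, rfl⟩
        exact hz
      · rintro ⟨hE, h1, h2⟩
        exact ⟨⟨⟨p.1, norm_one_ne_zero h1⟩, ⟨p.2, norm_one_ne_zero h2⟩⟩, ⟨hE, h1, h2⟩, rfl⟩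
    rw [himg]
    exact isCompact_ES P q
  have hcont : Continuous
      (fun z : {v : Fin (d + 1) → ℂ // v ≠ 0} × {w : Fin 2 → ℂ // w ≠ 0} =>
        ((Projectivization.mk' ℂ z.1, Projectivization.mk' ℂ z.2) : ProjSp d × ProjSp 1)) :=
    (continuous_quotient_mk'.comp continuous_fst).prodMk
      (continuous_quotient_mk'.comp continuous_snd)
  have himg2 : (fun z : {v : Fin (d + 1) → ℂ // v ≠ 0} × {w : Fin 2 → ℂ // w ≠ 0} =>
      ((Projectivization.mk' ℂ z.1, Projectivization.mk' ℂ z.2) : ProjSp d × ProjSp 1)) '' T =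
      Xset P q := by
    ext p
    constructor
    · rintro ⟨⟨⟨v, hv⟩, ⟨w, hw⟩⟩, ⟨hE, -, -⟩, rfl⟩
      exact ⟨v, hv, w, hw, rfl, hE⟩
    · rintro ⟨v, hv, w, hw, rfl, hE⟩
      have hnv : ‖v‖ ≠ 0 := norm_ne_zero_iff.mpr hv
      have hnw : ‖w‖ ≠ 0 := norm_ne_zero_iff.mpr hw
      set cv : ℂ := ((‖v‖ : ℝ) : ℂ)⁻¹ with hcv
      set cw : ℂ := ((‖w‖ : ℝ) : ℂ)⁻¹ with hcw
      have hcv0 : cv ≠ 0 := inv_ne_zero (by rwa [Ne, Complex.ofReal_eq_zero])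
      have hcw0 : cw ≠ 0 := inv_ne_zero (by rwa [Ne, Complex.ofReal_eq_zero])
      have hv' : cv • v ≠ 0 := smul_ne_zero hcv0 hv
      have hw' : cw • w ≠ 0 := smul_ne_zero hcw0 hw
      have hnv' : ‖cv • v‖ = 1 := by
        rw [norm_smul, hcv, norm_inv, Complex.norm_real, Real.norm_of_nonneg (norm_nonneg v),
          inv_mul_cancel₀ hnv]
      have hnw' : ‖cw • w‖ = 1 := by
        rw [norm_smul, hcw, norm_inv, Complex.norm_real, Real.norm_of_nonneg (norm_nonneg w),
          inv_mul_cancel₀ hnw]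
      refine ⟨⟨⟨cv • v, hv'⟩, ⟨cw • w, hw'⟩⟩, ⟨Efun_smul cv cw hE, hnv', hnw'⟩, ?_⟩
      rw [Prod.mk.injEq]
      constructor
      · rw [Projectivization.mk'_eq_mk, Projectivization.mk_eq_mk_iff']
        exact ⟨cv, rfl⟩
      · rw [Projectivization.mk'_eq_mk, Projectivization.mk_eq_mk_iff']
        exact ⟨cw, rfl⟩
  rw [← himg2]
  exact hTcomp.image hcont

/-- The dehomogenization chart. -/
def ratio (v : Fin (d + 1) → ℂ) : Fin d → ℂ := fun i => v i.succ / v 0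

lemma ratio_smul (a : ℂ) (ha : a ≠ 0) (v : Fin (d + 1) → ℂ) : ratio (a • v) = ratio v := by
  funext i
  show a * v i.succ / (a * v 0) = _
  rw [mul_div_mul_left _ _ ha]
  rfl

/-- The standard affine-chart open set of `ℙ^d` determined by `O'`. -/
def Om1 (O' : Set (Fin d → ℂ)) : Set (ProjSp d) :=
  {p | ∃ v hv, p = Projectivization.mk ℂ v hv ∧ (∀ i, v i ≠ 0) ∧ ratio v ∈ O'}

/-- The open set `{[w] : w 0 ≠ 0, w 1 ≠ 0}` of `ℙ¹`. -/
def Om2 : Set (ProjSp 1) :=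
  {p | ∃ w hw, p = Projectivization.mk ℂ w hw ∧ w 0 ≠ 0 ∧ w 1 ≠ 0}

lemma mem_Om1_iff {O' : Set (Fin d → ℂ)} {v : Fin (d + 1) → ℂ} {hv : v ≠ 0} :
    Projectivization.mk ℂ v hv ∈ Om1 O' ↔ (∀ i, v i ≠ 0) ∧ ratio v ∈ O' := by
  constructor
  · rintro ⟨v', hv', heq, hc, hr⟩
    rw [Projectivization.mk_eq_mk_iff] at heq
    obtain ⟨a, rfl⟩ := heq
    have ha : (a : ℂ) ≠ 0 := a.ne_zero
    refine ⟨fun i => ?_, ?_⟩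
    · show (a : ℂ) * v' i ≠ 0
      exact mul_ne_zero ha (hc i)
    · rwa [show (a • v' : Fin (d + 1) → ℂ) = (a : ℂ) • v' from rfl, ratio_smul _ ha]
  · intro h
    exact ⟨v, hv, rfl, h⟩

lemma mem_Om2_iff {w : Fin 2 → ℂ} {hw : w ≠ 0} :
    Projectivization.mk ℂ w hw ∈ Om2 ↔ w 0 ≠ 0 ∧ w 1 ≠ 0 := by
  constructor
  · rintro ⟨w', hw', heq, h0, h1⟩
    rw [Projectivization.mk_eq_mk_iff] at heq
    obtain ⟨a, rfl⟩ := heq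
    have ha : (a : ℂ) ≠ 0 := a.ne_zero
    exact ⟨mul_ne_zero ha h0, mul_ne_zero ha h1⟩
  · intro h
    exact ⟨w, hw, rfl, h⟩

lemma isOpen_Om1 {O' : Set (Fin d → ℂ)} (hO' : IsOpen O') : IsOpen (Om1 O') := by
  have hq : Topology.IsQuotientMap
      (Projectivization.mk' ℂ : {v : Fin (d + 1) → ℂ // v ≠ 0} → ProjSp d) :=
    isQuotientMap_quotient_mk'
  rw [← hq.isOpen_preimage]
  have hpre : (Projectivization.mk' ℂ) ⁻¹' (Om1 O') =
      Subtype.val ⁻¹' ({v : Fin (d + 1) → ℂ | ∀ i, v i ≠ 0} ∩ ratio ⁻¹' O') := by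
    ext z
    show Projectivization.mk ℂ z.1 z.2 ∈ Om1 O' ↔ _
    rw [mem_Om1_iff]
    rfl
  rw [hpre]
  have hA0 : IsOpen {v : Fin (d + 1) → ℂ | ∀ i, v i ≠ 0} := by
    have : {v : Fin (d + 1) → ℂ | ∀ i, v i ≠ 0} = ⋂ i, (fun v : Fin (d + 1) → ℂ => v i) ⁻¹' {0}ᶜ := by
      ext v; simp
    rw [this]
    exact isOpen_iInter_of_finite fun i => (isOpen_compl_singleton).preimage (continuous_apply i)
  have hrat : ContinuousOn (ratio (d := d)) {v : Fin (d + 1) → ℂ | ∀ i, v i ≠ 0} := by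
    apply continuousOn_pi.mpr
    intro i
    exact ((continuous_apply i.succ).continuousOn).div ((continuous_apply 0).continuousOn)
      (fun v hv => hv 0)
  exact (hrat.isOpen_inter_preimage hA0 hO').preimage continuous_subtype_val

lemma isOpen_Om2 : IsOpen (Om2) := by
  have hq : Topology.IsQuotientMap
      (Projectivization.mk' ℂ : {w : Fin 2 → ℂ // w ≠ 0} → ProjSp 1) :=
    isQuotientMap_quotient_mk'
  rw [← hq.isOpen_preimage]
  have hpre : (Projectivization.mk' ℂ) ⁻¹' Om2 =
      Subtype.val ⁻¹' ({w : Fin 2 → ℂ | w 0 ≠ 0} ∩ {w : Fin 2 → ℂ | w 1 ≠ 0}) := by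
    ext z
    show Projectivization.mk ℂ z.1 z.2 ∈ Om2 ↔ _
    rw [mem_Om2_iff]
    rfl
  rw [hpre]
  refine IsOpen.preimage continuous_subtype_val (IsOpen.inter ?_ ?_)
  · exact (isOpen_compl_singleton).preimage (continuous_apply 0)
  · exact (isOpen_compl_singleton).preimage (continuous_apply 1)

lemma key_image (P : MvPolynomial (Fin d) ℂ) (q : Fin d → ℕ) (O' : Set (Fin d → ℂ))
    (p : ProjSp d × ProjSp 1) (hpX : p ∈ Xset P q) (h1 : p.1 ∈ Om1 O') (h2 : p.2 ∈ Om2) :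
    ∃ x : Fin d → ℂ, (∀ i, x i ≠ 0) ∧ fval P q x ≠ 0 ∧ x ∈ O' ∧ p = imap P q x := by
  obtain ⟨v, hv, w, hw, rfl, hE⟩ := hpX
  rw [mem_Om1_iff] at h1
  rw [mem_Om2_iff] at h2
  obtain ⟨hvi, hrO⟩ := h1
  obtain ⟨hw0, hw1⟩ := h2
  set x : Fin d → ℂ := ratio v with hx
  have hxi : ∀ i, x i ≠ 0 := fun i => div_ne_zero (hvi i.succ) (hvi 0)
  have hcons : (v 0)⁻¹ • v = Fin.cons 1 x := by
    funext i
    refine Fin.cases ?_ (fun j => ?_) i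
    · show (v 0)⁻¹ * v 0 = 1
      exact inv_mul_cancel₀ (hvi 0)
    · show (v 0)⁻¹ * v j.succ = v j.succ / v 0
      rw [inv_mul_eq_div]
  have hE' := Efun_smul (v 0)⁻¹ 1 hE
  rw [one_smul, hcons] at hE'
  have hE'' : w 0 * eval x P = w 1 * ∏ i, x i ^ q i := by
    have := hE'
    unfold Efun at this
    simpa [homogEval_one] using this
  have hprod : (∏ i, x i ^ q i) ≠ 0 :=
    Finset.prod_ne_zero_iff.mpr fun i _ => pow_ne_zero _ (hxi i)
  have hfv : fval P q x = w 1 / w 0 := by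
    rw [fval]
    rw [div_eq_div_iff hprod hw0]
    linear_combination hE''
  have hfv0 : fval P q x ≠ 0 := by
    rw [hfv]
    exact div_ne_zero hw1 hw0
  refine ⟨x, hxi, hfv0, hrO, ?_⟩
  rw [imap, Prod.mk.injEq]
  constructor
  · exact mk_normalize v hv (hvi 0)
  · rw [mk_normalize2 w hw hw0, hfv]

end Aux

/-- Let `f = P/Q` with `Q` a monomial, `P` a polynomial sharing no variable with `Q`.
Then `i : x ↦ ([1:x],[1:f(x)])` maps the torus minus `f⁻¹(0)` into `X`, and is an open
immersion onto its image in `X`; the projection `f̂ : X → ℙ¹` is proper; and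
`f̂ ∘ i = j ∘ f`.  In particular `(X, i, f̂)` is a compactification of `f`. -/
theorem compactification_of_laurent {d : ℕ} (P : MvPolynomial (Fin d) ℂ) (q : Fin d → ℕ)
    (hP : P ≠ 0) (hgcd : ∀ i, q i ≠ 0 → ¬ MvPolynomial.X i ∣ P) :
    (∀ x : Fin d → ℂ, (∀ i, x i ≠ 0) → fval P q x ≠ 0 → imap P q x ∈ Xset P q) ∧
    (∃ g : {x : Fin d → ℂ // (∀ i, x i ≠ 0) ∧ fval P q x ≠ 0} → (Xset P q),
      (∀ x, (g x : ProjSp d × ProjSp 1) = imap P q x.1) ∧ Topology.IsOpenEmbedding g) ∧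
    IsProperMap (fun p : (Xset P q) => (p : ProjSp d × ProjSp 1).2) ∧
    (∀ x : Fin d → ℂ, (∀ i, x i ≠ 0) → fval P q x ≠ 0 →
      (imap P q x).2 = jmap (fval P q x)) := by
  have part1 : ∀ x : Fin d → ℂ, (∀ i, x i ≠ 0) → fval P q x ≠ 0 → imap P q x ∈ Xset P q := by
    intro x hx hf
    have hprod : (∏ i, x i ^ q i) ≠ 0 :=
      Finset.prod_ne_zero_iff.mpr fun i _ => pow_ne_zero _ (hx i)
    have hE : Efun P q (Fin.cons 1 x) ![1, fval P q x] := by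
      unfold Efun
      simp only [Fin.cons_zero, Fin.cons_succ, one_pow, mul_one, one_mul, homogEval_one,
        Matrix.cons_val_zero, Matrix.cons_val_one, Matrix.head_cons]
      rw [fval, div_mul_cancel₀ _ hprod]
    exact mem_Xset_iff.mpr hE
  refine ⟨part1, ?_, ?_, fun x _ _ => rfl⟩
  · refine ⟨fun x => ⟨imap P q x.1, part1 x.1 x.2.1 x.2.2⟩, fun x => rfl, ?_⟩
    refine Topology.IsOpenEmbedding.of_continuous_injective_isOpenMap ?_ ?_ ?_
    · -- continuity
      refine Continuous.subtype_mk ?_ _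
      have hc1 : Continuous fun x : {x : Fin d → ℂ // (∀ i, x i ≠ 0) ∧ fval P q x ≠ 0} =>
          (⟨Fin.cons 1 x.1, cons_ne_zero' x.1⟩ : {v : Fin (d + 1) → ℂ // v ≠ 0}) := by
        refine Continuous.subtype_mk ?_ _
        refine continuous_pi fun i => ?_
        refine Fin.cases ?_ (fun j => ?_) i
        · simp only [Fin.cons_zero]
          exact continuous_const
        · simp only [Fin.cons_succ]
          exact (continuous_apply j).comp continuous_subtype_val
      have hfval : Continuous fun x : {x : Fin d → ℂ // (∀ i, x i ≠ 0) ∧ fval P q x ≠ 0} =>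
          fval P q x.1 := by
        unfold fval
        have he : Continuous fun x : {x : Fin d → ℂ // (∀ i, x i ≠ 0) ∧ fval P q x ≠ 0} =>
            eval (x.1 : Fin d → ℂ) P := by
          have he0 : Continuous ((fun y : Fin d → ℂ => eval y P) ∘
              (Subtype.val : {x : Fin d → ℂ // (∀ i, x i ≠ 0) ∧ fval P q x ≠ 0} →
                (Fin d → ℂ))) :=
            Continuous.comp (MvPolynomial.continuous_eval P) continuous_subtype_val
          exact he0
        have hd : Continuous fun x : {x : Fin d → ℂ // (∀ i, x i ≠ 0) ∧ fval P q x ≠ 0} =>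
            ∏ i, (x.1 : Fin d → ℂ) i ^ q i :=
          continuous_finset_prod _ fun i _ =>
            ((continuous_apply i).comp continuous_subtype_val).pow _
        exact he.div hd fun x => Finset.prod_ne_zero_iff.mpr fun i _ => pow_ne_zero _ (x.2.1 i)
      have hc2 : Continuous fun x : {x : Fin d → ℂ // (∀ i, x i ≠ 0) ∧ fval P q x ≠ 0} =>
          (⟨![1, fval P q x.1], by intro h; have := congrFun h 0; simp at this⟩ :
            {w : Fin 2 → ℂ // w ≠ 0}) := by
        refine Continuous.subtype_mk ?_ _
        refine continuous_pi fun i => ?_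
        refine Fin.cases ?_ (fun j => ?_) i
        · simp only [Matrix.cons_val_zero]
          exact continuous_const
        · simp only [Matrix.cons_val_succ, Matrix.cons_val_fin_one]
          exact hfval
      exact ((continuous_quotient_mk'.comp hc1).prodMk (continuous_quotient_mk'.comp hc2))
    · -- injectivity
      intro x y hxy
      have h1 : (imap P q x.1).1 = (imap P q y.1).1 :=
        congrArg (fun z : (Xset P q) => (z : ProjSp d × ProjSp 1).1) hxy
      have h1' : Projectivization.mk ℂ (Fin.cons 1 (x.1 : Fin d → ℂ)) (cons_ne_zero' _) =
          Projectivization.mk ℂ (Fin.cons 1 (y.1 : Fin d → ℂ)) (cons_ne_zero' _) := h1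
      obtain ⟨a, ha⟩ := (Projectivization.mk_eq_mk_iff ℂ _ _ _ _).mp h1'
      have ha1 : (a : ℂ) = 1 := by
        have h0 := congrFun ha 0
        simpa [Units.smul_def] using h0
      refine Subtype.ext (funext fun i => ?_)
      have := congrFun ha i.succ
      simp only [Pi.smul_apply, Fin.cons_succ, Units.smul_def, smul_eq_mul, ha1, one_mul] at this
      exact this.symm
    · -- open map
      intro O hO
      obtain ⟨O', hO', hOeq⟩ := isOpen_induced_iff.mp hO
      have himg : ((fun x : {x : Fin d → ℂ // (∀ i, x i ≠ 0) ∧ fval P q x ≠ 0} =>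
          (⟨imap P q x.1, part1 x.1 x.2.1 x.2.2⟩ : (Xset P q))) '' O) =
          Subtype.val ⁻¹' (Om1 O' ×ˢ Om2) := by
        ext p
        constructor
        · rintro ⟨x, hxO, rfl⟩
          constructor
          · refine mem_Om1_iff.mpr ⟨?_, ?_⟩
            · intro i
              refine Fin.cases ?_ (fun j => ?_) i
              · simp
              · simpa using x.2.1 j
            · have hr : ratio (Fin.cons 1 x.1) = x.1 := by
                funext i
                simp [ratio]
              rw [hr]
              rw [← hOeq] at hxO
              exact hxO
          · refine mem_Om2_iff.mpr ⟨?_, ?_⟩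
            · simp
            · simpa using x.2.2
        · rintro ⟨hp1, hp2⟩
          obtain ⟨x, hx1, hx2, hxO', hpe⟩ := key_image P q O' p.1 p.2 hp1 hp2
          refine ⟨⟨x, hx1, hx2⟩, ?_, ?_⟩
          · rw [← hOeq]
            exact hxO'
          · exact Subtype.ext hpe.symm
      rw [himg]
      exact ((isOpen_Om1 hO').prod isOpen_Om2).preimage continuous_subtype_val
  · -- properness
    haveI : T2Space (ProjSp 1) := t2_projsp1
    haveI : CompactSpace (Xset P q) := isCompact_iff_compactSpace.mp (isCompact_Xset P q)
    exact (continuous_snd.comp continuous_subtype_val).isProperMap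
end
end

section
/- With notation as in the previous statement, under the same hypotheses, the leading coefficient (angular component) of the Laurent series f(φ(t)) equals f_{γ(ω)}(P₁(0), …, P_d(0)). -/
open Finset
open scoped Classical

noncomputable section

/-- Standard pairing `⟨ω, x⟩ = ∑ i, ω i * x i` on `ℝ^d`. -/
def pairing {d : ℕ} (ω x : Fin d → ℝ) : ℝ := ∑ i, ω i * x i

/-- The Newton polyhedron at infinity: the convex hull of `supp(f) ∪ {0}`. -/
def newtonPolyhedron {d : ℕ} (a : (Fin d → ℤ) →₀ ℂ) : Set (Fin d → ℝ) :=
  convexHull ℝ (((fun α : Fin d → ℤ => fun i => (α i : ℝ)) '' (a.support : Set (Fin d → ℤ))) ∪ {0})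

/-- The face Laurent polynomial `f_γ(x) = ∑_{α ∈ γ ∩ supp f} a_α x^α`, evaluated at `x`. -/
def faceEval {d : ℕ} (a : (Fin d → ℤ) →₀ ℂ) (γ : Set (Fin d → ℝ)) (x : Fin d → ℂ) : ℂ :=
  ∑ α ∈ a.support.filter (fun α => (fun i => (α i : ℝ)) ∈ γ), a α * ∏ i, x i ^ α i

/-- The Laurent series `f(φ(t))` obtained by substituting the Laurent arc
`φ(t) = (P_i(t) · t^{-ω_i})` into the Laurent polynomial `f = ∑ a_α x^α`. -/
def arcSubst {d : ℕ} (a : (Fin d → ℤ) →₀ ℂ) (P : Fin d → PowerSeries ℂ) (ω : Fin d → ℤ) :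
    LaurentSeries ℂ :=
  ∑ α ∈ a.support, (HahnSeries.C (a α)) *
    ∏ i, (((HahnSeries.ofPowerSeries ℤ ℂ) (P i)) * HahnSeries.single (-(ω i)) (1 : ℂ)) ^ α i

/-!
Each `Pᵢ` is a unit power series, so `φ^α = (∏ Pᵢ ^ αᵢ) · t^{-⟨ω,α⟩}` with `∏ Pᵢ ^ αᵢ` again a
power series, of constant term `P(0)^α`. The coefficient of `t^{-m}` in `a_α φ^α` is therefore
that of `t^{⟨ω,α⟩ - m}` in a power series: since `⟨ω,α⟩ ≤ m` on the support of `f`, it vanishes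
unless `α` lies on the face `⟨ω,·⟩ = m`, where it is `a_α P(0)^α`.
-/

open HahnSeries PowerSeries

theorem map_units_val_zpow {M G F : Type*} [Monoid M] [GroupWithZero G] [FunLike F M G]
    [MonoidHomClass F M G] (f : F) (u : Mˣ) (n : ℤ) : f ↑(u ^ n) = f ↑u ^ n := by
  rw [← MonoidHom.coe_coe f, ← Units.coe_map, map_zpow, Units.val_zpow_eq_zpow_val, Units.coe_map]

section LaurentArc

variable {K : Type*} [Field K]

theorem HahnSeries.single_zpow (g n : ℤ) :
    (single g (1 : K) : LaurentSeries K) ^ n = single (n * g) 1 := by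
  cases n with
  | ofNat k => simp
  | negSucc k =>
    rw [zpow_negSucc, single_pow, one_pow, Int.negSucc_eq, nsmul_eq_mul]
    refine inv_eq_of_mul_eq_one_right ?_
    rw [single_mul_single, one_mul, ← single_zero_one]
    congr 2
    push_cast
    ring

theorem HahnSeries.prod_single_one {ι Γ R : Type*} [AddCommMonoid Γ] [PartialOrder Γ]
    [IsOrderedCancelAddMonoid Γ] [CommSemiring R] (s : Finset ι) (g : ι → Γ) :
    ∏ i ∈ s, single (g i) (1 : R) = single (∑ i ∈ s, g i) 1 := by
  classical
  induction s using Finset.induction with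
  | empty => simp
  | insert j s hj ih => rw [prod_insert hj, sum_insert hj, ih, single_mul_single, one_mul]

theorem HahnSeries.prod_ofPowerSeries_mul_single_zpow {ι : Type*} (s : Finset ι)
    (u : ι → (PowerSeries K)ˣ) (w α : ι → ℤ) :
    ∏ i ∈ s, (ofPowerSeries ℤ K ↑(u i) * single (-w i) (1 : K)) ^ α i =
      ofPowerSeries ℤ K ↑(∏ i ∈ s, u i ^ α i) * single (-∑ i ∈ s, w i * α i) 1 := by
  simp_rw [mul_zpow, single_zpow, ← map_units_val_zpow, prod_mul_distrib, prod_single_one,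
    ← map_prod, Units.coe_prod, ← sum_neg_distrib, mul_neg, mul_comm]

theorem HahnSeries.coeff_C_mul_ofPowerSeries_mul_single_neg {R : Type*} [Semiring R] (r : R)
    (Q : PowerSeries R) {s m : ℤ} (h : s ≤ m) :
    (C r * (ofPowerSeries ℤ R Q * single (-s) 1)).coeff (-m) =
      if s = m then r * constantCoeff Q else 0 := by
  rw [C_mul_eq_smul, coeff_smul, coeff_mul_single, mul_one, PowerSeries.coeff_coe]
  split_ifs with hneg hsm hsm
  · omega
  · simp
  · simp [hsm]
  · omega

end LaurentArc

section NewtonPolyhedron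

variable {d : ℕ} (a : (Fin d → ℤ) →₀ ℂ) (ω : Fin d → ℤ) (m : ℤ)

theorem pairing_intCast (α : Fin d → ℤ) :
    pairing (fun i => (ω i : ℝ)) (fun i => (α i : ℝ)) = ((∑ i, ω i * α i : ℤ) : ℝ) := by
  simp [pairing]

theorem mem_newtonPolyhedron_of_mem_support {α : Fin d → ℤ} (hα : α ∈ a.support) :
    (fun i => (α i : ℝ)) ∈ newtonPolyhedron a :=
  subset_convexHull ℝ _ (Or.inl ⟨α, hα, rfl⟩)

theorem sum_mul_le_of_isGreatest
    (hmax : IsGreatest ((fun x => pairing (fun i => (ω i : ℝ)) x) '' newtonPolyhedron a) (m : ℝ))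
    {α : Fin d → ℤ} (hα : α ∈ a.support) : ∑ i, ω i * α i ≤ m := by
  have : pairing (fun i => (ω i : ℝ)) (fun i => (α i : ℝ)) ≤ m :=
    hmax.2 ⟨_, mem_newtonPolyhedron_of_mem_support a hα, rfl⟩
  rw [pairing_intCast] at this
  exact_mod_cast this

theorem faceEval_eq_sum_ite (x : Fin d → ℂ) :
    faceEval a {y ∈ newtonPolyhedron a | pairing (fun i => (ω i : ℝ)) y = (m : ℝ)} x =
      ∑ α ∈ a.support, if ∑ i, ω i * α i = m then a α * ∏ i, x i ^ α i else 0 := by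
  rw [faceEval, sum_filter]
  refine sum_congr rfl fun α hα => ?_
  simp only [Set.mem_ofPred_eq, mem_newtonPolyhedron_of_mem_support a hα, true_and,
    pairing_intCast, Int.cast_inj]

end NewtonPolyhedron

theorem coeff_arcSubst_neg {d : ℕ} (a : (Fin d → ℤ) →₀ ℂ) (P : Fin d → PowerSeries ℂ)
    (hP : ∀ i, constantCoeff (P i) ≠ 0) (ω : Fin d → ℤ) {m : ℤ}
    (hle : ∀ α ∈ a.support, ∑ i, ω i * α i ≤ m) :
    (arcSubst a P ω).coeff (-m) =
      ∑ α ∈ a.support, if ∑ i, ω i * α i = m then a α * ∏ i, constantCoeff (P i) ^ α i else 0 := by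
  obtain ⟨u, rfl⟩ : ∃ u : Fin d → (PowerSeries ℂ)ˣ, (fun i => (u i : PowerSeries ℂ)) = P :=
    ⟨fun i => (isUnit_iff_constantCoeff.mpr (hP i).isUnit).unit, funext fun i => rfl⟩
  rw [arcSubst, coeff_sum]
  refine sum_congr rfl fun α hα => ?_
  rw [prod_ofPowerSeries_mul_single_zpow, coeff_C_mul_ofPowerSeries_mul_single_neg _ _ (hle α hα),
    Units.coe_prod, map_prod]
  simp only [map_units_val_zpow]

theorem arc_leading_coeff_eq_faceEval_general {d : ℕ} (a : (Fin d → ℤ) →₀ ℂ)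
    (P : Fin d → PowerSeries ℂ) (hP : ∀ i, PowerSeries.constantCoeff (P i) ≠ 0)
    (ω : Fin d → ℤ) (m : ℤ)
    (hmax : IsGreatest ((fun x => pairing (fun i => (ω i : ℝ)) x) '' newtonPolyhedron a) (m : ℝ)) :
    (arcSubst a P ω).coeff (-m) =
      faceEval a {x ∈ newtonPolyhedron a | pairing (fun i => (ω i : ℝ)) x = (m : ℝ)}
        (fun i => PowerSeries.constantCoeff (P i)) := by
  rw [coeff_arcSubst_neg a P hP ω fun α hα => sum_mul_le_of_isGreatest a ω m hmax hα,
    faceEval_eq_sum_ite]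

/-- Let `φ(t) = (P_i(t)/t^{ω_i})` be a Laurent arc with each `P_i` an invertible power
series, and `f` a Laurent polynomial with Newton polyhedron at infinity `Γ₋ ∋ 0`.
If `m = max_{Γ₋} ⟨ω,·⟩ > 0` and the face polynomial `f_{γ(ω)}` does not vanish at
`(P_1(0),…,P_d(0))`, then the leading coefficient (angular component) of the Laurent series `f(φ(t))`
equals `f_{γ(ω)}(P_1(0),…,P_d(0))`. -/
theorem arc_leading_coeff_eq_faceEval {d : ℕ} (a : (Fin d → ℤ) →₀ ℂ)
    (P : Fin d → PowerSeries ℂ) (hP : ∀ i, PowerSeries.constantCoeff (P i) ≠ 0)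
    (ω : Fin d → ℤ) (m : ℤ) (hpos : 0 < m)
    (hmax : IsGreatest ((fun x => pairing (fun i => (ω i : ℝ)) x) '' newtonPolyhedron a) (m : ℝ))
    (hnd : faceEval a {x ∈ newtonPolyhedron a | pairing (fun i => (ω i : ℝ)) x = (m : ℝ)}
      (fun i => PowerSeries.constantCoeff (P i)) ≠ 0) :
    (arcSubst a P ω).coeff (-m) =
      faceEval a {x ∈ newtonPolyhedron a | pairing (fun i => (ω i : ℝ)) x = (m : ℝ)}
        (fun i => PowerSeries.constantCoeff (P i)) :=
  arc_leading_coeff_eq_faceEval_general a P hP ω m hmax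
end
end
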